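/- Let φ : U → ℝ be smooth on an open set U ⊆ ℝⁿ with positive-definite Hessian, g_{ij} := ∂_i∂_j φ. Define the Hessian curvature tensor Q_{ijkl} := ½ ∂_i∂_j∂_k∂_l φ − ½ Σ_{p,q} g^{pq} (∂_i∂_k∂_p φ)(∂_j∂_l∂_q φ), and the lowered Riemann curvature R̂_{ijkl} := Σ_m g_{im} R̂^m_{jkl}, where R̂^m_{jkl} := ∂_k γ^m_{lj} − ∂_l γ^m_{kj} + Σ_a ( γ^m_{ka} γ^a_{lj} − γ^m_{la} γ^a_{kj} ) with γ^m_{jk} := ½ Σ_p g^{mp} ∂_p∂_j∂_k φ. Then R̂_{ijkl} = ½ ( Q_{ijkl} − Q_{jikl} ) at every point of U and for all indices i,j,k,l. -/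

import Mathlib

/-!
Since `g` is invertible, lowering the upper index of `γ` gives the cubic form:
`Σ_m g_{am} γ^m_{jk} = ½ ∂_a∂_j∂_k φ` on `U`. Differentiating this identity by the Leibniz rule
expresses the derivative terms `Σ_m g_{im} ∂_k γ^m_{lj}` of `R̂_{ijkl}` through fourth derivatives
of `φ` and products `∂³φ · γ`. By the symmetry of partial derivatives the fourth derivatives
cancel, and expanding the remaining `γ`'s, using that `g⁻¹` is symmetric, yields exactly the
quadratic part of `½ (Q_{ijkl} - Q_{jikl})`.
-/

open Set Matrix

/-- Partial derivative in the `i`-th coordinate direction of a function on `ℝⁿ`. -/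
noncomputable def pd (n : ℕ) (i : Fin n) (f : (Fin n → ℝ) → ℝ) (x : Fin n → ℝ) : ℝ :=
  fderiv ℝ f x (Pi.single i 1)

open scoped ContDiff

lemma differentiableAt_nonsing_inv_apply {m E : Type*} [Fintype m] [DecidableEq m]
    [NormedAddCommGroup E] [NormedSpace ℝ E] {G : E → Matrix m m ℝ} {x : E}
    (hG : ∀ a b, DifferentiableAt ℝ (fun y => G y a b) x) (hGx : IsUnit (G x)) (a b : m) :
    DifferentiableAt ℝ (fun y => (G y)⁻¹ a b) x := by
  -- the `L∞`-operator norm makes matrices a normed ring, in which `Ring.inverse` is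
  -- differentiable at units
  let _ := Matrix.linftyOpNormedRing (n := m) (α := ℝ)
  let _ := Matrix.linftyOpNormedAlgebra (n := m) (α := ℝ) (R := ℝ)
  have hG' : DifferentiableAt ℝ G x := by
    rw [show G = fun y => ∑ a, ∑ b, G y a b • Matrix.single a b (1 : ℝ) from
      funext fun y => by simpa using Matrix.matrix_eq_sum_single (G y)]
    fun_prop
  have hinv : DifferentiableAt ℝ (fun y => Ring.inverse (G y)) x :=
    (differentiableAt_inverse hGx).comp x hG'
  simp only [nonsing_inv_eq_ringInverse]
  exact (LinearMap.toContinuousLinearMap (entryLinearMap ℝ ℝ a b)).differentiableAt.comp x hinv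

section PartialDerivatives

variable {n : ℕ} {U : Set (Fin n → ℝ)} {f f' : (Fin n → ℝ) → ℝ} {x : Fin n → ℝ}

lemma pd_congr_of_eqOn (hU : IsOpen U) (hx : x ∈ U) (h : EqOn f f' U) (i : Fin n) :
    pd n i f x = pd n i f' x := by
  rw [pd, pd, (h.eventuallyEq_of_mem (hU.mem_nhds hx)).fderiv_eq]

lemma ContDiffOn.pd (hU : IsOpen U) (hf : ContDiffOn ℝ ∞ f U) (i : Fin n) :
    ContDiffOn ℝ ∞ (pd n i f) U :=
  (hf.fderiv_of_isOpen hU (by simp)).clm_apply contDiffOn_const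

lemma pd_comm (hf : ContDiffAt ℝ 2 f x) (i j : Fin n) :
    pd n i (pd n j f) x = pd n j (pd n i f) x := by
  have hf' : DifferentiableAt ℝ (fderiv ℝ f) x :=
    (hf.fderiv_right (m := 1) le_rfl).differentiableAt one_ne_zero
  have hsecond : ∀ a b : Fin n, pd n a (pd n b f) x =
      fderiv ℝ (fderiv ℝ f) x (Pi.single a 1) (Pi.single b 1) := fun a b => by
    change fderiv ℝ (fun y => fderiv ℝ f y (Pi.single b 1)) x (Pi.single a 1) = _
    simp [fderiv_clm_apply hf' (differentiableAt_const _)]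
  rw [hsecond, hsecond, hf.isSymmSndFDerivAt (by simp)]

lemma pd_comm_of_contDiffOn (hU : IsOpen U) (hf : ContDiffOn ℝ ∞ f U) (hx : x ∈ U)
    (i j : Fin n) : pd n i (pd n j f) x = pd n j (pd n i f) x :=
  pd_comm ((hf.contDiffAt (hU.mem_nhds hx)).of_le (WithTop.coe_le_coe.2 le_top)) i j

lemma pd_pd_comm_of_contDiffOn (hU : IsOpen U) (hf : ContDiffOn ℝ ∞ f U) (hx : x ∈ U)
    (i j k : Fin n) : pd n i (pd n j (pd n k f)) x = pd n i (pd n k (pd n j f)) x :=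
  pd_congr_of_eqOn hU hx (fun _ hy => pd_comm_of_contDiffOn hU hf hy j k) i

lemma pd_pd_pd_rev_of_contDiffOn (hU : IsOpen U) (hf : ContDiffOn ℝ ∞ f U) (hx : x ∈ U)
    (i j k : Fin n) : pd n i (pd n j (pd n k f)) x = pd n k (pd n j (pd n i f)) x := by
  rw [pd_pd_comm_of_contDiffOn hU hf hx, pd_comm_of_contDiffOn hU (hf.pd hU j) hx,
    pd_pd_comm_of_contDiffOn hU hf hx]

lemma pd_fun_sum {ι : Type*} {s : Finset ι} {F : ι → (Fin n → ℝ) → ℝ}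
    (h : ∀ m ∈ s, DifferentiableAt ℝ (F m) x) (i : Fin n) :
    pd n i (fun y => ∑ m ∈ s, F m y) x = ∑ m ∈ s, pd n i (F m) x := by
  simp [pd, fderiv_fun_sum h]

lemma pd_fun_mul (hf : DifferentiableAt ℝ f x) (hf' : DifferentiableAt ℝ f' x) (i : Fin n) :
    pd n i (fun y => f y * f' y) x = pd n i f x * f' x + f x * pd n i f' x := by
  simp only [pd, fderiv_fun_mul hf hf', _root_.add_apply, _root_.smul_apply, smul_eq_mul]
  ring

lemma pd_const_mul (hf : DifferentiableAt ℝ f x) (c : ℝ) (i : Fin n) :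
    pd n i (fun y => c * f y) x = c * pd n i f x := by
  simp [pd, fderiv_const_mul hf c]

end PartialDerivatives

section HessianGeometry

variable {n : ℕ} (φ : (Fin n → ℝ) → ℝ)

noncomputable def hessian (x : Fin n → ℝ) : Matrix (Fin n) (Fin n) ℝ :=
  of fun i j => pd n i (pd n j φ) x

noncomputable def christoffel (m j k : Fin n) (x : Fin n → ℝ) : ℝ :=
  (1/2 : ℝ) * ∑ p : Fin n, (hessian φ x)⁻¹ m p * pd n p (pd n j (pd n k φ)) x

noncomputable def riemannUp (m j k l : Fin n) (x : Fin n → ℝ) : ℝ :=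
  pd n k (christoffel φ m l j) x - pd n l (christoffel φ m k j) x
    + ∑ a : Fin n, (christoffel φ m k a x * christoffel φ a l j x
      - christoffel φ m l a x * christoffel φ a k j x)

noncomputable def riemannLow (i j k l : Fin n) (x : Fin n → ℝ) : ℝ :=
  ∑ m : Fin n, hessian φ x i m * riemannUp φ m j k l x

noncomputable def hessianCurvature (i j k l : Fin n) (x : Fin n → ℝ) : ℝ :=
  (1/2 : ℝ) * pd n i (pd n j (pd n k (pd n l φ))) x
    - (1/2 : ℝ) * ∑ p : Fin n, ∑ q : Fin n, (hessian φ x)⁻¹ p q *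
        (pd n i (pd n k (pd n p φ)) x) * (pd n j (pd n l (pd n q φ)) x)

variable {φ} {U : Set (Fin n → ℝ)} {x : Fin n → ℝ}

lemma isSymm_hessian (hφ : ContDiffAt ℝ 2 φ x) : (hessian φ x).IsSymm :=
  IsSymm.ext fun i j => pd_comm hφ j i

lemma sum_hessian_mul_christoffel (hinv : IsUnit (hessian φ x)) (a j k : Fin n) :
    ∑ m : Fin n, hessian φ x a m * christoffel φ m j k x
      = (1/2 : ℝ) * pd n a (pd n j (pd n k φ)) x := by
  set T : Fin n → ℝ := fun p => pd n p (pd n j (pd n k φ)) x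
  calc ∑ m : Fin n, hessian φ x a m * christoffel φ m j k x
      = (1/2 : ℝ) * (hessian φ x *ᵥ ((hessian φ x)⁻¹ *ᵥ T)) a := by
        simp only [christoffel, mulVec, dotProduct, Finset.mul_sum]
        exact Finset.sum_congr rfl fun m _ => Finset.sum_congr rfl fun p _ => by ring
    _ = (1/2 : ℝ) * T a := by
        rw [mulVec_mulVec, mul_nonsing_inv _ ((isUnit_iff_isUnit_det _).1 hinv), one_mulVec]

lemma differentiableAt_christoffel (hU : IsOpen U) (hφ : ContDiffOn ℝ ∞ φ U) (hx : x ∈ U)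
    (hinv : IsUnit (hessian φ x)) (m j k : Fin n) :
    DifferentiableAt ℝ (christoffel φ m j k) x := by
  have hdiff {f : (Fin n → ℝ) → ℝ} (hf : ContDiffOn ℝ ∞ f U) : DifferentiableAt ℝ f x :=
    (hf.differentiableOn (by simp)).differentiableAt (hU.mem_nhds hx)
  have hginv := differentiableAt_nonsing_inv_apply
    (fun a b => hdiff ((hφ.pd hU b).pd hU a)) hinv
  unfold christoffel
  exact (DifferentiableAt.fun_sum fun p _ =>
    (hginv m p).mul (hdiff (((hφ.pd hU k).pd hU j).pd hU p))).const_mul _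

lemma sum_hessian_mul_pd_christoffel (hU : IsOpen U) (hφ : ContDiffOn ℝ ∞ φ U)
    (hinv : ∀ y ∈ U, IsUnit (hessian φ y)) (hx : x ∈ U) (a j k e : Fin n) :
    ∑ m : Fin n, hessian φ x a m * pd n e (christoffel φ m j k) x
      = (1/2 : ℝ) * pd n e (pd n a (pd n j (pd n k φ))) x
        - ∑ m : Fin n, pd n e (pd n a (pd n m φ)) x * christoffel φ m j k x := by
  have hdiff {f : (Fin n → ℝ) → ℝ} (hf : ContDiffOn ℝ ∞ f U) : DifferentiableAt ℝ f x :=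
    (hf.differentiableOn (by simp)).differentiableAt (hU.mem_nhds hx)
  have hg (m : Fin n) : DifferentiableAt ℝ (fun y => hessian φ y a m) x :=
    hdiff ((hφ.pd hU m).pd hU a)
  have hγ := differentiableAt_christoffel hU hφ hx (hinv x hx)
  have leibniz : pd n e (fun y => ∑ m : Fin n, hessian φ y a m * christoffel φ m j k y) x
      = ∑ m : Fin n, (pd n e (pd n a (pd n m φ)) x * christoffel φ m j k x
          + hessian φ x a m * pd n e (christoffel φ m j k) x) := by
    rw [pd_fun_sum fun m _ => (hg m).fun_mul (hγ m j k)]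
    exact Finset.sum_congr rfl fun m _ => pd_fun_mul (hg m) (hγ m j k) e
  rw [pd_congr_of_eqOn hU hx (fun y hy => sum_hessian_mul_christoffel (hinv y hy) a j k),
    pd_const_mul (hdiff ((hφ.pd hU k).pd hU j |>.pd hU a)), Finset.sum_add_distrib] at leibniz
  linarith

lemma sum_mul_christoffel (hU : IsOpen U) (hφ : ContDiffOn ℝ ∞ φ U) (hx : x ∈ U)
    (u : Fin n → ℝ) (j l : Fin n) :
    ∑ a : Fin n, u a * christoffel φ a l j x
      = (1/2 : ℝ) * ∑ p : Fin n, ∑ q : Fin n,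
          (hessian φ x)⁻¹ p q * u p * pd n j (pd n l (pd n q φ)) x := by
  simp only [christoffel, Finset.mul_sum]
  refine Finset.sum_congr rfl fun p _ => Finset.sum_congr rfl fun q _ => ?_
  rw [pd_pd_pd_rev_of_contDiffOn hU hφ hx q l j]
  ring

lemma riemannLow_eq_sum (i j k l : Fin n) :
    riemannLow φ i j k l x
      = ∑ m : Fin n, hessian φ x i m * pd n k (christoffel φ m l j) x
        - ∑ m : Fin n, hessian φ x i m * pd n l (christoffel φ m k j) x
        + (∑ a : Fin n, (∑ m : Fin n, hessian φ x i m * christoffel φ m k a x)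
              * christoffel φ a l j x
          - ∑ a : Fin n, (∑ m : Fin n, hessian φ x i m * christoffel φ m l a x)
              * christoffel φ a k j x) := by
  simp only [riemannLow, riemannUp, mul_add, mul_sub, Finset.mul_sum, Finset.sum_mul,
    Finset.sum_add_distrib, Finset.sum_sub_distrib, mul_assoc]
  rw [Finset.sum_comm, Finset.sum_comm (f := fun m a => _ * (christoffel φ m l a x * _))]

theorem riemannLow_eq_half_sub_hessianCurvature (hU : IsOpen U) (hφ : ContDiffOn ℝ ∞ φ U)
    (hinv : ∀ y ∈ U, IsUnit (hessian φ y)) (hx : x ∈ U) (i j k l : Fin n) :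
    riemannLow φ i j k l x
      = (1/2 : ℝ) * (hessianCurvature φ i j k l x - hessianCurvature φ j i k l x) := by
  have hcomm {f : (Fin n → ℝ) → ℝ} (hf : ContDiffOn ℝ ∞ f U) (a b : Fin n) :=
    pd_comm_of_contDiffOn hU hf hx a b
  have hinvSymm : ((hessian φ x)⁻¹).IsSymm :=
    (isSymm_hessian ((hφ.contDiffAt (hU.mem_nhds hx)).of_le (WithTop.coe_le_coe.2 le_top))).inv
  have hswap : ∑ p : Fin n, ∑ q : Fin n, (hessian φ x)⁻¹ p q
        * pd n j (pd n k (pd n p φ)) x * pd n i (pd n l (pd n q φ)) x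
      = ∑ p : Fin n, ∑ q : Fin n, (hessian φ x)⁻¹ p q
        * pd n i (pd n l (pd n p φ)) x * pd n j (pd n k (pd n q φ)) x := by
    rw [Finset.sum_comm]
    refine Finset.sum_congr rfl fun p _ => Finset.sum_congr rfl fun q _ => ?_
    rw [hinvSymm.apply]
    ring
  rw [riemannLow_eq_sum, sum_hessian_mul_pd_christoffel hU hφ hinv hx,
    sum_hessian_mul_pd_christoffel hU hφ hinv hx,
    pd_pd_pd_rev_of_contDiffOn hU (hφ.pd hU j) hx k i l]
  simp only [sum_hessian_mul_christoffel (hinv x hx), mul_assoc, ← Finset.mul_sum,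
    fun m => hcomm (hφ.pd hU m) k i, fun m => hcomm (hφ.pd hU m) l i]
  rw [sum_mul_christoffel hU hφ hx, sum_mul_christoffel hU hφ hx, hessianCurvature,
    hessianCurvature, hcomm ((hφ.pd hU l).pd hU k) j i, hswap]
  ring

end HessianGeometry

theorem stmt6_general
    (n : ℕ) (U : Set (Fin n → ℝ)) (hU : IsOpen U)
    (φ : (Fin n → ℝ) → ℝ)
    (hφ : ContDiffOn ℝ (⊤ : ℕ∞) φ U)
    -- the Hessian metric `g_{ij} = ∂_i∂_j φ`
    (g : (Fin n → ℝ) → Matrix (Fin n) (Fin n) ℝ)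
    (hg : ∀ x, g x = Matrix.of (fun i j : Fin n => pd n i (pd n j φ) x))
    (hpos : ∀ x ∈ U, (g x).PosDef)
    -- `γ^m_{jk} := ½ Σ_p g^{mp} ∂_p∂_j∂_k φ`
    (γ : Fin n → Fin n → Fin n → (Fin n → ℝ) → ℝ)
    (hγ : ∀ m j k : Fin n, ∀ x, γ m j k x = (1/2 : ℝ) *
      ∑ p : Fin n, (g x)⁻¹ m p * pd n p (pd n j (pd n k φ)) x)
    -- `R̂^m_{jkl} := ∂_k γ^m_{lj} - ∂_l γ^m_{kj} + Σ_a (γ^m_{ka}γ^a_{lj} - γ^m_{la}γ^a_{kj})`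
    (Rup : Fin n → Fin n → Fin n → Fin n → (Fin n → ℝ) → ℝ)
    (hRup : ∀ m j k l : Fin n, ∀ x, Rup m j k l x =
      pd n k (fun y => γ m l j y) x - pd n l (fun y => γ m k j y) x
        + ∑ a : Fin n, (γ m k a x * γ a l j x - γ m l a x * γ a k j x))
    -- `R̂_{ijkl} := Σ_m g_{im} R̂^m_{jkl}`
    (Rlow : Fin n → Fin n → Fin n → Fin n → (Fin n → ℝ) → ℝ)
    (hRlow : ∀ i j k l : Fin n, ∀ x, Rlow i j k l x = ∑ m : Fin n, g x i m * Rup m j k l x)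
    -- `Q_{ijkl} := ½ ∂_i∂_j∂_k∂_l φ - ½ Σ_{p,q} g^{pq} (∂_i∂_k∂_p φ)(∂_j∂_l∂_q φ)`
    (Q : Fin n → Fin n → Fin n → Fin n → (Fin n → ℝ) → ℝ)
    (hQ : ∀ i j k l : Fin n, ∀ x, Q i j k l x =
      (1/2 : ℝ) * pd n i (pd n j (pd n k (pd n l φ))) x
        - (1/2 : ℝ) * ∑ p : Fin n, ∑ q : Fin n, (g x)⁻¹ p q *
            (pd n i (pd n k (pd n p φ)) x) * (pd n j (pd n l (pd n q φ)) x)) :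
    ∀ x ∈ U, ∀ i j k l : Fin n,
      Rlow i j k l x = (1/2 : ℝ) * (Q i j k l x - Q j i k l x) := by
  obtain rfl : g = hessian φ := funext hg
  obtain rfl : γ = christoffel φ := by ext m j k x; exact hγ m j k x
  obtain rfl : Rup = riemannUp φ := by ext m j k l x; exact hRup m j k l x
  obtain rfl : Rlow = riemannLow φ := by ext i j k l x; exact hRlow i j k l x
  obtain rfl : Q = hessianCurvature φ := by ext i j k l x; exact hQ i j k l x
  intro x hx i j k l
  exact riemannLow_eq_half_sub_hessianCurvature hU hφ (fun y hy => (hpos y hy).isUnit) hx i j k l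

/-- for a Hessian metric `g = D²φ`, with Hessian curvature tensor
`Q_{ijkl} = ½ ∂_i∂_j∂_k∂_l φ - ½ Σ_{p,q} g^{pq}(∂_i∂_k∂_p φ)(∂_j∂_l∂_q φ)` and lowered
Riemann curvature `R̂_{ijkl} = Σ_m g_{im} R̂^m_{jkl}`, one has
`R̂_{ijkl} = ½ (Q_{ijkl} - Q_{jikl})`. -/
theorem stmt6
    (n : ℕ) (hn : 1 ≤ n) (U : Set (Fin n → ℝ)) (hU : IsOpen U) (hUne : U.Nonempty)
    (φ : (Fin n → ℝ) → ℝ)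
    (hφ : ContDiffOn ℝ (⊤ : ℕ∞) φ U)
    -- the Hessian metric `g_{ij} = ∂_i∂_j φ`
    (g : (Fin n → ℝ) → Matrix (Fin n) (Fin n) ℝ)
    (hg : ∀ x, g x = Matrix.of (fun i j : Fin n => pd n i (pd n j φ) x))
    (hpos : ∀ x ∈ U, (g x).PosDef)
    -- `γ^m_{jk} := ½ Σ_p g^{mp} ∂_p∂_j∂_k φ`
    (γ : Fin n → Fin n → Fin n → (Fin n → ℝ) → ℝ)
    (hγ : ∀ m j k : Fin n, ∀ x, γ m j k x = (1/2 : ℝ) *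
      ∑ p : Fin n, (g x)⁻¹ m p * pd n p (pd n j (pd n k φ)) x)
    -- `R̂^m_{jkl} := ∂_k γ^m_{lj} - ∂_l γ^m_{kj} + Σ_a (γ^m_{ka}γ^a_{lj} - γ^m_{la}γ^a_{kj})`
    (Rup : Fin n → Fin n → Fin n → Fin n → (Fin n → ℝ) → ℝ)
    (hRup : ∀ m j k l : Fin n, ∀ x, Rup m j k l x =
      pd n k (fun y => γ m l j y) x - pd n l (fun y => γ m k j y) x
        + ∑ a : Fin n, (γ m k a x * γ a l j x - γ m l a x * γ a k j x))
    -- `R̂_{ijkl} := Σ_m g_{im} R̂^m_{jkl}`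
    (Rlow : Fin n → Fin n → Fin n → Fin n → (Fin n → ℝ) → ℝ)
    (hRlow : ∀ i j k l : Fin n, ∀ x, Rlow i j k l x = ∑ m : Fin n, g x i m * Rup m j k l x)
    -- `Q_{ijkl} := ½ ∂_i∂_j∂_k∂_l φ - ½ Σ_{p,q} g^{pq} (∂_i∂_k∂_p φ)(∂_j∂_l∂_q φ)`
    (Q : Fin n → Fin n → Fin n → Fin n → (Fin n → ℝ) → ℝ)
    (hQ : ∀ i j k l : Fin n, ∀ x, Q i j k l x =
      (1/2 : ℝ) * pd n i (pd n j (pd n k (pd n l φ))) x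
        - (1/2 : ℝ) * ∑ p : Fin n, ∑ q : Fin n, (g x)⁻¹ p q *
            (pd n i (pd n k (pd n p φ)) x) * (pd n j (pd n l (pd n q φ)) x)) :
    ∀ x ∈ U, ∀ i j k l : Fin n,
      Rlow i j k l x = (1/2 : ℝ) * (Q i j k l x - Q j i k l x) :=
  stmt6_general n U hU φ hφ g hg hpos γ hγ Rup hRup Rlow hRlow Q hQ
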